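/- A quadratic zero is isolated: let Ω be an entanglement witness and let (φ₀,χ₀) be a zero of Ω with ‖φ₀‖ = ‖χ₀‖ = 1 which is quadratic (has no Hessian zero). Then there exists ε > 0 such that every zero (φ,χ) of Ω with ‖φ‖ = ‖χ‖ = 1, ‖φ − φ₀‖ < ε and ‖χ − χ₀‖ < ε satisfies φ = a·φ₀ and χ = b·χ₀ for some complex scalars a, b. -/

import Mathlib

open Matrix
open scoped ComplexOrder

noncomputable section

namespace EW

/-- Complex square matrices indexed by `Fin Na × Fin Nb`. -/
abbrev Mat (Na Nb : ℕ) := Matrix (Fin Na × Fin Nb) (Fin Na × Fin Nb) ℂ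

/-- Kronecker product of vectors: `(φ⊗χ)_(i,j) = φ_i · χ_j`. -/
def kron {Na Nb : ℕ} (φ : Fin Na → ℂ) (χ : Fin Nb → ℂ) : Fin Na × Fin Nb → ℂ :=
  fun p => φ p.1 * χ p.2

/-- Sesquilinear pairing `xᴴ A y`. -/
def pair {n : Type*} [Fintype n] (A : Matrix n n ℂ) (x y : n → ℂ) : ℂ :=
  star x ⬝ᵥ A.mulVec y

/-- The biquadratic form `f_A(φ,χ) = (φ⊗χ)ᴴ A (φ⊗χ)`. -/
def biquad {Na Nb : ℕ} (A : Mat Na Nb) (φ : Fin Na → ℂ) (χ : Fin Nb → ℂ) : ℂ :=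
  pair A (kron φ χ) (kron φ χ)

/-- An entanglement witness: a Hermitian matrix whose biquadratic form is nonnegative. -/
def IsWitness {Na Nb : ℕ} (A : Mat Na Nb) : Prop :=
  A.IsHermitian ∧ ∀ φ χ, 0 ≤ biquad A φ χ

/-- `S₁°`, the set of trace-one entanglement witnesses. -/
def witnessSet (Na Nb : ℕ) : Set (Mat Na Nb) :=
  { Ω | IsWitness Ω ∧ Ω.trace = 1 }

/-- A zero of a witness: a pair of nonzero vectors where the biquadratic form vanishes. -/
def IsZeroOf {Na Nb : ℕ} (Ω : Mat Na Nb) (φ₀ : Fin Na → ℂ) (χ₀ : Fin Nb → ℂ) : Prop :=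
  φ₀ ≠ 0 ∧ χ₀ ≠ 0 ∧ biquad Ω φ₀ χ₀ = 0

/-- The Hessian form
`H_A(φ₀,χ₀;ξ,ζ) = Re[(ξ⊗χ₀)ᴴA(ξ⊗χ₀) + (φ₀⊗ζ)ᴴA(φ₀⊗ζ) + 2(φ₀⊗ζ)ᴴA(ξ⊗χ₀) + 2(φ₀⊗χ₀)ᴴA(ξ⊗ζ)]`. -/
def hessForm {Na Nb : ℕ} (A : Mat Na Nb) (φ₀ : Fin Na → ℂ) (χ₀ : Fin Nb → ℂ)
    (ξ : Fin Na → ℂ) (ζ : Fin Nb → ℂ) : ℝ :=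
  (pair A (kron ξ χ₀) (kron ξ χ₀) + pair A (kron φ₀ ζ) (kron φ₀ ζ)
    + 2 * pair A (kron φ₀ ζ) (kron ξ χ₀) + 2 * pair A (kron φ₀ χ₀) (kron ξ ζ)).re

/-- A Hessian zero of `Ω` at the zero `(φ₀,χ₀)`. -/
def IsHessianZeroAt {Na Nb : ℕ} (Ω : Mat Na Nb) (φ₀ : Fin Na → ℂ) (χ₀ : Fin Nb → ℂ)
    (ξ : Fin Na → ℂ) (ζ : Fin Nb → ℂ) : Prop :=
  (ξ, ζ) ≠ (0, 0) ∧ star φ₀ ⬝ᵥ ξ = 0 ∧ star χ₀ ⬝ᵥ ζ = 0 ∧ hessForm Ω φ₀ χ₀ ξ ζ = 0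

/-- A quadratic witness: a witness all of whose zeros have no Hessian zeros. -/
def IsQuadraticWitness {Na Nb : ℕ} (Ω : Mat Na Nb) : Prop :=
  IsWitness Ω ∧ ∀ φ₀ χ₀, IsZeroOf Ω φ₀ χ₀ → ∀ ξ ζ, ¬ IsHessianZeroAt Ω φ₀ χ₀ ξ ζ

/-- Partial transpose with respect to the second factor. -/
def ptrans {Na Nb : ℕ} (A : Mat Na Nb) : Mat Na Nb :=
  fun p q => A (p.1, q.2) (q.1, p.2)

/-- Euclidean norm of a complex vector. -/
def enorm {n : Type*} [Fintype n] (x : n → ℂ) : ℝ :=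
  Real.sqrt (star x ⬝ᵥ x).re

/-- Frobenius norm of a matrix. -/
def frobNorm {Na Nb : ℕ} (A : Mat Na Nb) : ℝ :=
  Real.sqrt (∑ i, ∑ j, ‖A i j‖ ^ 2)

/-- `S₁`, the set of separable states: the convex hull of normalized pure product states. -/
def sepSet (Na Nb : ℕ) : Set (Mat Na Nb) :=
  convexHull ℝ { M | ∃ (φ : Fin Na → ℂ) (χ : Fin Nb → ℂ), enorm (kron φ χ) = 1 ∧
    M = Matrix.vecMulVec (kron φ χ) (star (kron φ χ)) }

/-- `Γ` satisfies the constraint system of the witness `Ω`. -/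
def SatisfiesConstraints {Na Nb : ℕ} (Ω Γ : Mat Na Nb) : Prop :=
  (∀ φ₀ χ₀, IsZeroOf Ω φ₀ χ₀ →
    (∀ φ, pair Γ (kron φ χ₀) (kron φ₀ χ₀) = 0) ∧
    (∀ χ, pair Γ (kron φ₀ χ) (kron φ₀ χ₀) = 0)) ∧
  (∀ φ₀ χ₀, IsZeroOf Ω φ₀ χ₀ → ∀ ξ ζ, IsHessianZeroAt Ω φ₀ χ₀ ξ ζ →
    ∀ ξ' ζ', star φ₀ ⬝ᵥ ξ' = 0 → star χ₀ ⬝ᵥ ζ' = 0 →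
      hessForm Γ φ₀ χ₀ (ξ + ξ') (ζ + ζ') =
        hessForm Γ φ₀ χ₀ ξ ζ + hessForm Γ φ₀ χ₀ ξ' ζ') ∧
  (∀ φ₀ χ₀, IsZeroOf Ω φ₀ χ₀ → ∀ ξ ζ, IsHessianZeroAt Ω φ₀ χ₀ ξ ζ →
    (pair Γ (kron φ₀ ζ) (kron ξ ζ) + pair Γ (kron ξ χ₀) (kron ξ ζ)).re = 0)

end EW

/-!
At a zero `(φ₀, χ₀)` of a witness `Ω`, nonnegativity of `f_Ω` forces `Ω (φ₀ ⊗ χ₀)` to be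
orthogonal to every `x ⊗ χ₀` and `φ₀ ⊗ y`, so `f_Ω(φ₀ + ξ, χ₀ + ζ)` is the Hessian form
`H(ξ, ζ)` plus terms of order three and four. The same expansion shows `H ≥ 0`; without Hessian
zeros, compactness of the unit sphere in the orthogonal complement of `(φ₀, χ₀)` gives
`H(ξ, ζ) ≥ c ‖(ξ, ζ)‖²` there, which beats the higher-order terms near `0`. A zero `(φ, χ)` close
to `(φ₀, χ₀)` has nonzero components along `φ₀` and `χ₀`, so it can be rescaled to a zero of the
form `(φ₀ + ξ, χ₀ + ζ)` with `ξ ⊥ φ₀`, `ζ ⊥ χ₀` and `(ξ, ζ)` small, hence `(ξ, ζ) = 0`.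
-/

open Filter Topology

section QuadraticRemainder

variable {E : Type*} [NormedAddCommGroup E] {Q R : E → ℝ} {C : ℝ}

theorem nonneg_of_add_nonneg_of_abs_le_cube [NormedSpace ℝ E]
    (hQ : ∀ (t : ℝ) v, Q (t • v) = t ^ 2 * Q v) (hR : ∀ v, ‖v‖ ≤ 1 → |R v| ≤ C * ‖v‖ ^ 3)
    (hQR : ∀ v, 0 ≤ Q v + R v) (v : E) :
    0 ≤ Q v := by
  have hsmall : ∀ t ∈ Set.Ioo 0 (‖v‖ + 1)⁻¹, -(C * ‖v‖ ^ 3 * t) ≤ Q v := by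
    rintro t ⟨ht, htv⟩
    have hnorm : ‖t • v‖ = t * ‖v‖ := by rw [norm_smul, Real.norm_of_nonneg ht.le]
    have hle : ‖t • v‖ ≤ 1 := by
      have := mul_lt_mul_of_pos_right htv (by positivity : 0 < ‖v‖ + 1)
      rw [inv_mul_cancel₀ (by positivity)] at this
      nlinarith
    have hRt : R (t • v) ≤ C * (t * ‖v‖) ^ 3 := (le_abs_self _).trans (hnorm ▸ hR _ hle)
    have h := hQR (t • v)
    rw [hQ] at h
    have : 0 ≤ t ^ 2 * (Q v + C * ‖v‖ ^ 3 * t) := by nlinarith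
    nlinarith [(mul_nonneg_iff_of_pos_left (by positivity)).mp this]
  have hlim : Tendsto (fun t : ℝ => -(C * ‖v‖ ^ 3 * t)) (𝓝[>] 0) (𝓝 0) := by
    refine ((Continuous.tendsto' ?_ 0 0 (by simp)).mono_left nhdsWithin_le_nhds)
    fun_prop
  exact le_of_tendsto hlim (eventually_of_mem (Ioo_mem_nhdsGT (by positivity)) hsmall)

theorem exists_pos_mul_norm_sq_le [NormedSpace ℝ E] [ProperSpace E] {V : Set E}
    (hV : IsClosed V) (hVsmul : ∀ (t : ℝ), ∀ v ∈ V, t • v ∈ V) (hQc : Continuous Q)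
    (hQ : ∀ (t : ℝ) v, Q (t • v) = t ^ 2 * Q v) (hpos : ∀ v ∈ V, v ≠ 0 → 0 < Q v) :
    ∃ c > 0, ∀ v ∈ V, c * ‖v‖ ^ 2 ≤ Q v := by
  have hQ0 : Q 0 = 0 := by simpa using hQ 0 0
  have hunit : ∀ v ∈ V, v ≠ 0 → ‖v‖⁻¹ • v ∈ V ∩ Metric.sphere 0 1 := fun v hv hv0 =>
    ⟨hVsmul _ v hv, by simp [norm_smul, hv0]⟩
  have hscale : ∀ v, Q v = ‖v‖ ^ 2 * Q (‖v‖⁻¹ • v) := fun v => by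
    rcases eq_or_ne v 0 with rfl | hv0
    · simp [hQ0]
    · rw [hQ, ← mul_assoc, ← mul_pow, mul_inv_cancel₀ (norm_ne_zero_iff.mpr hv0), one_pow,
        one_mul]
  rcases (V ∩ Metric.sphere 0 1).eq_empty_or_nonempty with hK | hK
  · refine ⟨1, one_pos, fun v hv => ?_⟩
    obtain rfl : v = 0 := by
      by_contra hv0
      simpa [hK] using hunit v hv hv0
    simp [hQ0]
  · obtain ⟨u, ⟨huV, hu⟩, hmin⟩ :=
      ((isCompact_sphere 0 1).inter_left hV).exists_isMinOn hK hQc.continuousOn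
    refine ⟨Q u, hpos u huV (ne_zero_of_mem_unit_sphere ⟨u, hu⟩), fun v hv => ?_⟩
    rcases eq_or_ne v 0 with rfl | hv0
    · simp [hQ0]
    · rw [hscale v, mul_comm]
      exact mul_le_mul_of_nonneg_left (hmin (hunit v hv hv0)) (sq_nonneg _)

theorem eventually_eq_zero_of_add_eq_zero {V : Set E} {c : ℝ} (hc : 0 < c)
    (hQ : ∀ v ∈ V, c * ‖v‖ ^ 2 ≤ Q v) (hR : ∀ v, ‖v‖ ≤ 1 → |R v| ≤ C * ‖v‖ ^ 3) :
    ∀ᶠ v in 𝓝 0, v ∈ V → Q v + R v = 0 → v = 0 := by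
  have hnorm : Tendsto (fun v : E => ‖v‖) (𝓝 0) (𝓝 0) := by
    simpa using (continuous_norm.tendsto (0 : E))
  have hC : Tendsto (fun v : E => C * ‖v‖) (𝓝 0) (𝓝 0) := by simpa using hnorm.const_mul C
  filter_upwards [hnorm.eventually_lt_const one_pos, hC.eventually_lt_const hc]
    with v hv1 hvC hvV hzero
  by_contra hv0
  have hpos : 0 < ‖v‖ := norm_pos_iff.mpr hv0
  have hQR := (hQ v hvV).trans (le_of_eq_of_le (eq_neg_of_add_eq_zero_left hzero)
    ((neg_le_abs _).trans (hR v hv1.le)))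
  nlinarith [mul_lt_mul_of_pos_right hvC (pow_pos hpos 2)]

end QuadraticRemainder

namespace EW

section Pair

variable {n : Type*} [Fintype n] (A : Matrix n n ℂ)

theorem pair_add_left (x y z : n → ℂ) : pair A (x + y) z = pair A x z + pair A y z := by
  simp [pair, add_dotProduct]

theorem pair_add_right (x y z : n → ℂ) : pair A x (y + z) = pair A x y + pair A x z := by
  simp [pair, mulVec_add, dotProduct_add]

theorem pair_smul_left (c : ℂ) (x y : n → ℂ) : pair A (c • x) y = star c * pair A x y := by
  simp [pair, star_smul, smul_dotProduct]

theorem pair_smul_right (c : ℂ) (x y : n → ℂ) : pair A x (c • y) = c * pair A x y := by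
  simp [pair, mulVec_smul, dotProduct_smul]

theorem pair_swap {A : Matrix n n ℂ} (hA : A.IsHermitian) (x y : n → ℂ) :
    pair A y x = star (pair A x y) := by
  rw [pair, pair, star_dotProduct, star_mulVec, ← dotProduct_mulVec, hA.eq]

theorem norm_pair_le (x y : n → ℂ) : ‖pair A x y‖ ≤ (∑ i, ∑ j, ‖A i j‖) * ‖x‖ * ‖y‖ := by
  calc ‖pair A x y‖ = ‖∑ i, ∑ j, star (x i) * (A i j * y j)‖ := by
        simp [pair, dotProduct, mulVec, Finset.mul_sum]
    _ ≤ ∑ i, ∑ j, ‖A i j‖ * (‖x‖ * ‖y‖) := by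
        refine (norm_sum_le _ _).trans (Finset.sum_le_sum fun i _ =>
          (norm_sum_le _ _).trans (Finset.sum_le_sum fun j _ => ?_))
        rw [norm_mul, norm_mul, norm_star]
        calc ‖x i‖ * (‖A i j‖ * ‖y j‖) ≤ ‖x‖ * (‖A i j‖ * ‖y‖) := by
              gcongr <;> exact norm_le_pi_norm _ _
          _ = ‖A i j‖ * (‖x‖ * ‖y‖) := by ring
    _ = (∑ i, ∑ j, ‖A i j‖) * ‖x‖ * ‖y‖ := by simp only [Finset.sum_mul, mul_assoc]

theorem pair_eq_zero_of_forall_re_nonneg {A : Matrix n n ℂ}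
    (hA : A.IsHermitian) {e u : n → ℂ} (he : pair A e e = 0)
    (h : ∀ c : ℂ, 0 ≤ (pair A (e + c • u) (e + c • u)).re) : pair A u e = 0 := by
  set z := pair A u e
  set q := (pair A u u).re
  have hexp : ∀ t : ℝ, (pair A (e + (-(t * z)) • u) (e + (-(t * z)) • u)).re =
      t * Complex.normSq z * (t * q - 2) := fun t => by
    rw [pair_add_left, pair_add_right, pair_add_right, pair_smul_left, pair_smul_right,
      pair_smul_right, pair_smul_left, he, pair_swap hA u e]
    simp only [RCLike.star_def, neg_mul, zero_add, star_neg, star_mul', Complex.conj_ofReal,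
      mul_neg, neg_neg, Complex.add_re, Complex.neg_re, Complex.mul_re, Complex.ofReal_re,
      Complex.ofReal_im, zero_mul, sub_zero, Complex.conj_re, Complex.mul_im, add_zero,
      Complex.conj_im, sub_neg_eq_add, neg_add_rev, neg_zero, Complex.normSq_apply, q]
    ring
  set t := (|q| + 1)⁻¹
  have ht : 0 < t := by positivity
  have htq : t * q < 1 := by
    have : t * (|q| + 1) = 1 := inv_mul_cancel₀ (by positivity)
    nlinarith [le_abs_self q]
  have hz := h (-(t * z))
  rw [hexp] at hz
  by_contra hz0
  nlinarith [mul_pos (mul_pos ht (Complex.normSq_pos.mpr hz0)) (by linarith : 0 < 2 - t * q)]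

end Pair

section Vectors

variable {n : Type*} [Fintype n]

theorem norm_le_enorm (x : n → ℂ) : ‖x‖ ≤ EW.enorm x := by
  have hre : (star x ⬝ᵥ x).re = ∑ i, ‖x i‖ ^ 2 := by
    simp [dotProduct, Complex.re_sum, Complex.conj_mul', ← Complex.ofReal_pow]
  refine (pi_norm_le_iff_of_nonneg (Real.sqrt_nonneg _)).mpr fun i => ?_
  rw [hre]
  exact Real.le_sqrt_of_sq_le (Finset.single_le_sum (fun j _ => sq_nonneg ‖x j‖)
    (Finset.mem_univ i))

theorem eventually_star_dotProduct_ne_zero {v : n → ℂ} (hv : v ≠ 0) :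
    ∀ᶠ x in 𝓝 v, star v ⬝ᵥ x ≠ 0 := by
  have hcont : Continuous fun x : n → ℂ => star v ⬝ᵥ x := by unfold dotProduct; fun_prop
  exact hcont.continuousAt.eventually_ne (dotProduct_star_self_eq_zero.not.mpr hv)

/-- Rescales `x` so that its component along `v` is `v` itself; for `x` near `v` this is
defined, and `alignTo v x - v` is small and orthogonal to `v`. -/
def alignTo (v x : n → ℂ) : n → ℂ := (star v ⬝ᵥ v / star v ⬝ᵥ x) • x

theorem star_dotProduct_alignTo {v x : n → ℂ} (hx : star v ⬝ᵥ x ≠ 0) :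
    star v ⬝ᵥ alignTo v x = star v ⬝ᵥ v := by
  rw [alignTo, dotProduct_smul, smul_eq_mul, div_mul_cancel₀ _ hx]

theorem tendsto_alignTo {v : n → ℂ} (hv : v ≠ 0) : Tendsto (alignTo v) (𝓝 v) (𝓝 v) := by
  have hvv : star v ⬝ᵥ v ≠ 0 := dotProduct_star_self_eq_zero.not.mpr hv
  have hcont : Continuous fun x : n → ℂ => star v ⬝ᵥ x := by unfold dotProduct; fun_prop
  have : ContinuousAt (alignTo v) v :=
    (continuousAt_const.div hcont.continuousAt hvv).smul continuousAt_id
  simpa [ContinuousAt, alignTo, hvv] using this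

theorem exists_eq_smul_of_alignTo_eq {v x : n → ℂ} (hv : v ≠ 0) (h : alignTo v x = v) :
    ∃ a : ℂ, x = a • v := by
  rw [alignTo] at h
  have hc : star v ⬝ᵥ v / star v ⬝ᵥ x ≠ 0 := fun hc => hv (by rw [← h, hc, zero_smul])
  exact ⟨_, by rw [← h, inv_smul_smul₀ hc]⟩

end Vectors

section Kron

variable {Na Nb : ℕ}

theorem kron_add_left (φ ψ : Fin Na → ℂ) (χ : Fin Nb → ℂ) :
    kron (φ + ψ) χ = kron φ χ + kron ψ χ := by
  ext; simp [kron, add_mul]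

theorem kron_add_right (φ : Fin Na → ℂ) (χ ψ : Fin Nb → ℂ) :
    kron φ (χ + ψ) = kron φ χ + kron φ ψ := by
  ext; simp [kron, mul_add]

theorem kron_smul_left (c : ℂ) (φ : Fin Na → ℂ) (χ : Fin Nb → ℂ) :
    kron (c • φ) χ = c • kron φ χ := by
  ext; simp [kron, mul_assoc]

theorem kron_smul_right (c : ℂ) (φ : Fin Na → ℂ) (χ : Fin Nb → ℂ) :
    kron φ (c • χ) = c • kron φ χ := by
  ext; simp [kron, mul_left_comm]

theorem norm_kron_le (φ : Fin Na → ℂ) (χ : Fin Nb → ℂ) : ‖kron φ χ‖ ≤ ‖φ‖ * ‖χ‖ :=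
  (pi_norm_le_iff_of_nonneg (by positivity)).mpr fun p => by
    rw [kron, norm_mul]
    exact mul_le_mul (norm_le_pi_norm φ p.1) (norm_le_pi_norm χ p.2) (norm_nonneg _)
      (norm_nonneg _)

theorem biquad_smul (Ω : Mat Na Nb) (a b : ℂ) (φ : Fin Na → ℂ) (χ : Fin Nb → ℂ) :
    biquad Ω (a • φ) (b • χ) = star (a * b) * (a * b) * biquad Ω φ χ := by
  rw [biquad, biquad, kron_smul_left, kron_smul_right, smul_smul, pair_smul_left,
    pair_smul_right]
  ring

end Kron

section Witness

variable {Na Nb : ℕ} {Ω : Mat Na Nb} {φ₀ : Fin Na → ℂ} {χ₀ : Fin Nb → ℂ}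

theorem IsWitness.re_biquad_nonneg (hΩ : IsWitness Ω) (φ : Fin Na → ℂ) (χ : Fin Nb → ℂ) :
    0 ≤ (biquad Ω φ χ).re :=
  (Complex.nonneg_iff.mp (hΩ.2 φ χ)).1

theorem IsWitness.pair_kron_left_eq_zero (hΩ : IsWitness Ω) (hz : biquad Ω φ₀ χ₀ = 0)
    (x : Fin Na → ℂ) : pair Ω (kron x χ₀) (kron φ₀ χ₀) = 0 :=
  pair_eq_zero_of_forall_re_nonneg hΩ.1 hz fun c => by
    simpa [biquad, kron_add_left, kron_smul_left] using hΩ.re_biquad_nonneg (φ₀ + c • x) χ₀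

theorem IsWitness.pair_kron_right_eq_zero (hΩ : IsWitness Ω) (hz : biquad Ω φ₀ χ₀ = 0)
    (y : Fin Nb → ℂ) : pair Ω (kron φ₀ y) (kron φ₀ χ₀) = 0 :=
  pair_eq_zero_of_forall_re_nonneg hΩ.1 hz fun c => by
    simpa [biquad, kron_add_right, kron_smul_right] using hΩ.re_biquad_nonneg φ₀ (χ₀ + c • y)

def taylorRemainder (Ω : Mat Na Nb) (φ₀ : Fin Na → ℂ) (χ₀ : Fin Nb → ℂ)
    (ξ : Fin Na → ℂ) (ζ : Fin Nb → ℂ) : ℝ :=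
  (2 * (pair Ω (kron φ₀ ζ) (kron ξ ζ) + pair Ω (kron ξ χ₀) (kron ξ ζ))
    + pair Ω (kron ξ ζ) (kron ξ ζ)).re

theorem IsWitness.re_biquad_add (hΩ : IsWitness Ω) (hz : biquad Ω φ₀ χ₀ = 0)
    (ξ : Fin Na → ℂ) (ζ : Fin Nb → ℂ) :
    (biquad Ω (φ₀ + ξ) (χ₀ + ζ)).re = hessForm Ω φ₀ χ₀ ξ ζ + taylorRemainder Ω φ₀ χ₀ ξ ζ := by
  have hswap : ∀ x y, (pair Ω y x).re = (pair Ω x y).re := fun x y => by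
    rw [pair_swap hΩ.1, Complex.star_def, Complex.conj_re]
  have hu := congrArg Complex.re (hΩ.pair_kron_left_eq_zero hz ξ)
  have hw := congrArg Complex.re (hΩ.pair_kron_right_eq_zero hz ζ)
  have he := congrArg Complex.re hz
  simp only [biquad, hessForm, taylorRemainder, kron_add_left, kron_add_right, pair_add_left,
    pair_add_right, two_mul, Complex.add_re, Complex.zero_re] at he hu hw ⊢
  linarith [hswap (kron φ₀ χ₀) (kron ξ χ₀), hswap (kron φ₀ χ₀) (kron φ₀ ζ),
    hswap (kron φ₀ ζ) (kron ξ χ₀), hswap (kron φ₀ χ₀) (kron ξ ζ),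
    hswap (kron φ₀ ζ) (kron ξ ζ), hswap (kron ξ χ₀) (kron ξ ζ)]

theorem hessForm_smul (t : ℝ) (ξ : Fin Na → ℂ) (ζ : Fin Nb → ℂ) :
    hessForm Ω φ₀ χ₀ (t • ξ) (t • ζ) = t ^ 2 * hessForm Ω φ₀ χ₀ ξ ζ := by
  simp only [hessForm, ← Complex.coe_smul, kron_smul_left, kron_smul_right, smul_smul,
    pair_smul_left, pair_smul_right, Complex.star_def, Complex.conj_ofReal]
  rw [← Complex.re_ofReal_mul]
  congr 1
  push_cast
  ring

theorem continuous_hessForm :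
    Continuous fun p : (Fin Na → ℂ) × (Fin Nb → ℂ) => hessForm Ω φ₀ χ₀ p.1 p.2 := by
  unfold hessForm pair kron mulVec dotProduct
  fun_prop

theorem norm_pair_kron_le (Ω : Mat Na Nb) (φ φ' : Fin Na → ℂ) (χ χ' : Fin Nb → ℂ) :
    ‖pair Ω (kron φ χ) (kron φ' χ')‖ ≤ (∑ i, ∑ j, ‖Ω i j‖) * (‖φ‖ * ‖χ‖) * (‖φ'‖ * ‖χ'‖) :=
  (norm_pair_le Ω _ _).trans (by gcongr <;> exact norm_kron_le _ _)

theorem exists_abs_taylorRemainder_le (Ω : Mat Na Nb) (φ₀ : Fin Na → ℂ) (χ₀ : Fin Nb → ℂ) :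
    ∃ C, ∀ p : (Fin Na → ℂ) × (Fin Nb → ℂ), ‖p‖ ≤ 1 →
      |taylorRemainder Ω φ₀ χ₀ p.1 p.2| ≤ C * ‖p‖ ^ 3 := by
  set K := ∑ i, ∑ j, ‖Ω i j‖
  have hK : 0 ≤ K := by positivity
  refine ⟨K * (2 * ‖φ₀‖ + 2 * ‖χ₀‖ + 1), fun ⟨ξ, ζ⟩ hp => ?_⟩
  set r := ‖(ξ, ζ)‖
  have hξ : ‖ξ‖ ≤ r := norm_fst_le (ξ, ζ)
  have hζ : ‖ζ‖ ≤ r := norm_snd_le (ξ, ζ)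
  have h1 : ‖pair Ω (kron φ₀ ζ) (kron ξ ζ)‖ ≤ K * (‖φ₀‖ * r) * (r * r) :=
    (norm_pair_kron_le _ _ _ _ _).trans (by gcongr)
  have h2 : ‖pair Ω (kron ξ χ₀) (kron ξ ζ)‖ ≤ K * (r * ‖χ₀‖) * (r * r) :=
    (norm_pair_kron_le _ _ _ _ _).trans (by gcongr)
  have h3 : ‖pair Ω (kron ξ ζ) (kron ξ ζ)‖ ≤ K * (r * r) * (r * r) :=
    (norm_pair_kron_le _ _ _ _ _).trans (by gcongr)
  have hr4 : r ^ 4 ≤ r ^ 3 := pow_le_pow_of_le_one (norm_nonneg _) hp (by norm_num)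
  calc |taylorRemainder Ω φ₀ χ₀ ξ ζ|
      ≤ 2 * (‖pair Ω (kron φ₀ ζ) (kron ξ ζ)‖ + ‖pair Ω (kron ξ χ₀) (kron ξ ζ)‖)
        + ‖pair Ω (kron ξ ζ) (kron ξ ζ)‖ := by
        refine (Complex.abs_re_le_norm _).trans ((norm_add_le _ _).trans ?_)
        rw [norm_mul, Complex.norm_two]
        gcongr
        exact norm_add_le _ _
    _ ≤ K * (2 * ‖φ₀‖ + 2 * ‖χ₀‖ + 1) * r ^ 3 := by
        nlinarith [mul_le_mul_of_nonneg_left hr4 hK]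

theorem IsWitness.hessForm_nonneg (hΩ : IsWitness Ω) (hz : biquad Ω φ₀ χ₀ = 0)
    (ξ : Fin Na → ℂ) (ζ : Fin Nb → ℂ) : 0 ≤ hessForm Ω φ₀ χ₀ ξ ζ := by
  obtain ⟨C, hC⟩ := exists_abs_taylorRemainder_le Ω φ₀ χ₀
  have hQ : ∀ (t : ℝ) (p : (Fin Na → ℂ) × (Fin Nb → ℂ)),
      hessForm Ω φ₀ χ₀ (t • p).1 (t • p).2 = t ^ 2 * hessForm Ω φ₀ χ₀ p.1 p.2 :=
    fun t p => hessForm_smul t p.1 p.2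
  have hQR : ∀ p : (Fin Na → ℂ) × (Fin Nb → ℂ),
      0 ≤ hessForm Ω φ₀ χ₀ p.1 p.2 + taylorRemainder Ω φ₀ χ₀ p.1 p.2 := fun p => by
    rw [← hΩ.re_biquad_add hz]
    exact hΩ.re_biquad_nonneg _ _
  exact nonneg_of_add_nonneg_of_abs_le_cube hQ hC hQR (ξ, ζ)

theorem IsWitness.eventually_eq_zero_of_biquad_eq_zero (hΩ : IsWitness Ω)
    (hz : biquad Ω φ₀ χ₀ = 0) (hquad : ∀ ξ ζ, ¬ IsHessianZeroAt Ω φ₀ χ₀ ξ ζ) :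
    ∀ᶠ p : (Fin Na → ℂ) × (Fin Nb → ℂ) in 𝓝 0, star φ₀ ⬝ᵥ p.1 = 0 → star χ₀ ⬝ᵥ p.2 = 0 →
      biquad Ω (φ₀ + p.1) (χ₀ + p.2) = 0 → p = 0 := by
  set V := {p : (Fin Na → ℂ) × (Fin Nb → ℂ) | star φ₀ ⬝ᵥ p.1 = 0 ∧ star χ₀ ⬝ᵥ p.2 = 0}
  have hV : IsClosed V := by
    refine (isClosed_eq ?_ continuous_const).inter (isClosed_eq ?_ continuous_const) <;>
    · unfold dotProduct; fun_prop
  have hVsmul : ∀ (t : ℝ), ∀ p ∈ V, t • p ∈ V := fun t p hp => by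
    simp [V, ← Complex.coe_smul, dotProduct_smul, hp.1, hp.2]
  have hpos : ∀ p ∈ V, p ≠ 0 → 0 < hessForm Ω φ₀ χ₀ p.1 p.2 := fun p hp hp0 =>
    (hΩ.hessForm_nonneg hz _ _).lt_of_ne' fun h0 => hquad p.1 p.2 ⟨hp0, hp.1, hp.2, h0⟩
  obtain ⟨c, hc, hcoer⟩ := exists_pos_mul_norm_sq_le hV hVsmul continuous_hessForm
    (fun t p => hessForm_smul t p.1 p.2) hpos
  obtain ⟨C, hC⟩ := exists_abs_taylorRemainder_le Ω φ₀ χ₀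
  filter_upwards [eventually_eq_zero_of_add_eq_zero hc hcoer hC] with p hp hξ hζ hzero
  exact hp ⟨hξ, hζ⟩ (by rw [← hΩ.re_biquad_add hz, hzero, Complex.zero_re])

theorem IsWitness.eventually_proportional_of_biquad_eq_zero (hΩ : IsWitness Ω)
    (hz : IsZeroOf Ω φ₀ χ₀) (hquad : ∀ ξ ζ, ¬ IsHessianZeroAt Ω φ₀ χ₀ ξ ζ) :
    ∀ᶠ q : (Fin Na → ℂ) × (Fin Nb → ℂ) in 𝓝 (φ₀, χ₀), biquad Ω q.1 q.2 = 0 →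
      ∃ a b : ℂ, q.1 = a • φ₀ ∧ q.2 = b • χ₀ := by
  obtain ⟨hφ₀, hχ₀, hz⟩ := hz
  have hlim : Tendsto (fun q : (Fin Na → ℂ) × (Fin Nb → ℂ) =>
      (alignTo φ₀ q.1 - φ₀, alignTo χ₀ q.2 - χ₀)) (𝓝 (φ₀, χ₀)) (𝓝 0) := by
    have := (((tendsto_alignTo hφ₀).comp (continuous_fst.tendsto (φ₀, χ₀))).sub_const
      φ₀).prodMk_nhds (((tendsto_alignTo hχ₀).comp (continuous_snd.tendsto _)).sub_const χ₀)
    rwa [sub_self, sub_self, Prod.mk_zero_zero] at this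
  filter_upwards [hlim.eventually (hΩ.eventually_eq_zero_of_biquad_eq_zero hz hquad),
    (continuous_fst.tendsto (φ₀, χ₀)).eventually (eventually_star_dotProduct_ne_zero hφ₀),
    (continuous_snd.tendsto (φ₀, χ₀)).eventually (eventually_star_dotProduct_ne_zero hχ₀)]
    with q hq hq₁ hq₂ hzero
  have hp := hq (by rw [dotProduct_sub, star_dotProduct_alignTo hq₁, sub_self])
    (by rw [dotProduct_sub, star_dotProduct_alignTo hq₂, sub_self])
    (by simp only [add_sub_cancel, alignTo, biquad_smul, hzero, mul_zero])
  simp only [Prod.mk_eq_zero, sub_eq_zero] at hp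
  obtain ⟨a, ha⟩ := exists_eq_smul_of_alignTo_eq hφ₀ hp.1
  obtain ⟨b, hb⟩ := exists_eq_smul_of_alignTo_eq hχ₀ hp.2
  exact ⟨a, b, ha, hb⟩

end Witness

end EW

open EW
theorem quadratic_zero_isolated_general (Na Nb : ℕ) (Ω : Mat Na Nb) (hΩ : IsWitness Ω)
    (φ₀ : Fin Na → ℂ) (χ₀ : Fin Nb → ℂ) (hz : IsZeroOf Ω φ₀ χ₀)
    (hquad : ∀ ξ ζ, ¬ IsHessianZeroAt Ω φ₀ χ₀ ξ ζ) :
    ∃ ε > 0, ∀ (φ : Fin Na → ℂ) (χ : Fin Nb → ℂ), IsZeroOf Ω φ χ →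
      EW.enorm φ = 1 → EW.enorm χ = 1 →
      EW.enorm (φ - φ₀) < ε → EW.enorm (χ - χ₀) < ε →
      ∃ a b : ℂ, φ = a • φ₀ ∧ χ = b • χ₀ := by
  obtain ⟨ε, hε, hball⟩ :=
    Metric.eventually_nhds_iff.mp (hΩ.eventually_proportional_of_biquad_eq_zero hz hquad)
  refine ⟨ε, hε, fun φ χ hzero _ _ hφ hχ => hball (y := (φ, χ)) ?_ hzero.2.2⟩
  rw [Prod.dist_eq, max_lt_iff, dist_eq_norm, dist_eq_norm]
  exact ⟨(norm_le_enorm _).trans_lt hφ, (norm_le_enorm _).trans_lt hχ⟩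

theorem quadratic_zero_isolated (Na Nb : ℕ) (Ω : Mat Na Nb) (hΩ : IsWitness Ω)
    (φ₀ : Fin Na → ℂ) (χ₀ : Fin Nb → ℂ) (hz : IsZeroOf Ω φ₀ χ₀)
    (hnφ : EW.enorm φ₀ = 1) (hnχ : EW.enorm χ₀ = 1)
    (hquad : ∀ ξ ζ, ¬ IsHessianZeroAt Ω φ₀ χ₀ ξ ζ) :
    ∃ ε > 0, ∀ (φ : Fin Na → ℂ) (χ : Fin Nb → ℂ), IsZeroOf Ω φ χ →
      EW.enorm φ = 1 → EW.enorm χ = 1 →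
      EW.enorm (φ - φ₀) < ε → EW.enorm (χ - χ₀) < ε →
      ∃ a b : ℂ, φ = a • φ₀ ∧ χ = b • χ₀ :=
  quadratic_zero_isolated_general Na Nb Ω hΩ φ₀ χ₀ hz hquad
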